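/- Let S = M[U; I, J; P] be a Rees matrix semigroup such that there is an entry p of P with pU¹ = U (where U¹ is U with identity adjoined). If S is automatic then U is automatic. -/

import Mathlib

namespace AutoSg

/-- Evaluation of a nonempty word over alphabet `A` in a semigroup `S`
via the letter-interpretation map `ψ`; the empty word evaluates to `none`. -/
def evalWord {S : Type*} [Semigroup S] {A : Type*} (ψ : A → S) : List A → Option S
  | [] => none
  | a :: w => some ((w.map ψ).foldl (· * ·) (ψ a))

/-- The standard padding map `δ_A` on pairs of words, with `none` playing
the role of the padding symbol `$`. -/
def padMap {A : Type*} (u v : List A) : List (Option A × Option A) :=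
  List.zipWith Prod.mk (u.map some ++ List.replicate (v.length - u.length) none)
    (v.map some ++ List.replicate (u.length - v.length) none)

/-- `(A, L)` is an automatic structure for the semigroup `S` with respect to `ψ`. -/
structure IsAutomaticStructure (S : Type*) [Semigroup S] {A : Type*} [Finite A]
    (ψ : A → S) (L : Language A) : Prop where
  nonempty_words : ∀ w ∈ L, w ≠ []
  regular : L.IsRegular
  onto : ∀ s : S, ∃ w ∈ L, evalWord ψ w = some s
  eq_regular : Language.IsRegular
    {p : List (Option A × Option A) |
      ∃ u ∈ L, ∃ v ∈ L, p = padMap u v ∧ evalWord ψ u = evalWord ψ v}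
  mul_regular : ∀ a : A, Language.IsRegular
    {p : List (Option A × Option A) |
      ∃ u ∈ L, ∃ v ∈ L, p = padMap u v ∧ evalWord ψ (u ++ [a]) = evalWord ψ v}

/-- An automatic structure with uniqueness: each element of `S` is represented
by exactly one word of `L`. -/
structure IsAutomaticStructureWithUniqueness (S : Type*) [Semigroup S] {A : Type*} [Finite A]
    (ψ : A → S) (L : Language A) extends IsAutomaticStructure S ψ L : Prop where
  unique : ∀ u ∈ L, ∀ v ∈ L, evalWord ψ u = evalWord ψ v → u = v

/-- A semigroup is automatic if it admits an automatic structure. -/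
def IsAutomaticSemigroup (S : Type*) [Semigroup S] : Prop :=
  ∃ (A : Type) (_ : Finite A) (ψ : A → S) (L : Language A), IsAutomaticStructure S ψ L


/-- The Rees matrix semigroup `M[U; I, J; P]` over a semigroup `U` with sandwich
matrix `P : J × I → U`: underlying set `I × U × J` with multiplication
`(l₁,s₁,r₁)(l₂,s₂,r₂) = (l₁, s₁ p_{r₁ l₂} s₂, r₂)`. -/
def ReesMatrix (U I J : Type*) (_P : J → I → U) := I × U × J

instance {U I J : Type*} [Semigroup U] (P : J → I → U) : Mul (ReesMatrix U I J P) :=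
  ⟨fun x y => ((x.1, x.2.1 * P x.2.2 y.1 * y.2.1, y.2.2) : I × U × J)⟩

theorem ReesMatrix.mul_def {U I J : Type*} [Semigroup U] {P : J → I → U}
    (x y : ReesMatrix U I J P) :
    x * y = ((x.1, x.2.1 * P x.2.2 y.1 * y.2.1, y.2.2) : I × U × J) := rfl

instance {U I J : Type*} [Semigroup U] (P : J → I → U) : Semigroup (ReesMatrix U I J P) where
  mul_assoc x y z := by
    rcases x with ⟨a, b, c⟩
    rcases y with ⟨d, e, f⟩
    rcases z with ⟨g, h, k⟩
    show ((a, b * P c d * e * P f g * h, k) : I × U × J) = (a, b * P c d * (e * P f g * h), k)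
    simp only [mul_assoc]


/-- A semigroup is finitely generated if a finite subset generates it. -/
def SemigroupFG (S : Type*) [Semigroup S] : Prop :=
  ∃ U : Finset S, Subsemigroup.closure (U : Set S) = ⊤

/-- `(A, L)` is a prefix-automatic structure for `S`: an automatic structure such
that the relation `{(w₁, w₂) : w₁ ∈ L, w₂ ∈ Pref(L), w₁ = w₂}` is also regular. -/
structure IsPrefixAutomaticStructure (S : Type*) [Semigroup S] {A : Type*} [Finite A]
    (ψ : A → S) (L : Language A) extends IsAutomaticStructure S ψ L : Prop where
  prefix_regular : Language.IsRegular
    {p : List (Option A × Option A) |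
      ∃ u ∈ L, ∃ v : List A, v ≠ [] ∧ (∃ w, v ++ w ∈ L) ∧
        p = padMap u v ∧ evalWord ψ u = evalWord ψ v}

/-- A semigroup is prefix-automatic if it admits a prefix-automatic structure. -/
def IsPrefixAutomaticSemigroup (S : Type*) [Semigroup S] : Prop :=
  ∃ (A : Type) (_ : Finite A) (ψ : A → S) (L : Language A), IsPrefixAutomaticStructure S ψ L

end AutoSg


/-!
Fix `i ∈ I` and `j ∈ J`. If `ψ aₖ = (lₖ, uₖ, rₖ)`, the word `a₁ ⋯ aₙ` represents
`(l₁, u₁ p_{r₁l₂} u₂ ⋯ p_{rₙ₋₁lₙ} uₙ, rₙ)` in `M[U; I, J; P]`. Reading every letter `aₖ` together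
with its predecessor, as the element `p_{rₖ₋₁lₖ} uₖ` of `U`, turns the words of the automatic
structure `L` that represent elements of `{i} × U × {j}` into representatives of all of `U`.
This recoding is letter-to-letter with one letter of memory, so it preserves regular languages
and regular padded relations, and equality in `U` is equality in `M[U; I, J; P]`. For right
multiplication by a generator `x`, write a representative as `w a`: then `w a x` is represented
by `z t_a`, where `z ∈ L` represents `w` and `t_a ∈ L` represents `(l_a, u_a x, j)`. This
relation is a composite of the equality and multiplier relations of `L`, and composition
preserves regularity of padded relations.
-/

namespace Language

variable {α β : Type*}

theorem IsRegular.preimage_filterMap {L : Language α} (hL : L.IsRegular) (f : β → Option α) :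
    Language.IsRegular {x : List β | x.filterMap f ∈ L} := by
  obtain ⟨σ, _, M, rfl⟩ := hL
  let N : DFA β σ := ⟨fun s b => (f b).elim s (M.step s), M.start, M.accept⟩
  have hN : ∀ x s, N.evalFrom s x = M.evalFrom s (x.filterMap f) := by
    intro x
    induction x with
    | nil => intro s; rfl
    | cons b x ih =>
      intro s
      cases hb : f b <;> simp [N, hb, ih]
  exact ⟨σ, inferInstance, N,
    Set.ext fun x => Iff.of_eq (congrArg (· ∈ M.accept) (hN x M.start))⟩

theorem IsRegular.preimage_map {L : Language α} (hL : L.IsRegular) (f : β → α) :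
    Language.IsRegular {x : List β | x.map f ∈ L} := by
  simpa only [List.filterMap_eq_map] using hL.preimage_filterMap (some ∘ f)

theorem IsRegular.image_map {L : Language α} (hL : L.IsRegular) (f : α → β) :
    Language.IsRegular (List.map f '' (L : Set (List α))) := by
  obtain ⟨σ, _, M, rfl⟩ := hL
  let N : NFA β σ := ⟨fun s b => {t | ∃ a, f a = b ∧ M.step s a = t}, {M.start}, M.accept⟩
  have hN : ∀ y s t, t ∈ N.evalFrom {s} y ↔ ∃ x, x.map f = y ∧ M.evalFrom s x = t := by
    intro y
    induction y with
    | nil => intro s t; simp [eq_comm]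
    | cons b y ih =>
      intro s t
      rw [NFA.evalFrom_cons, NFA.mem_evalFrom_iff_exists]
      simp only [NFA.stepSet_singleton, ih]
      constructor
      · rintro ⟨_, ⟨a, rfl, rfl⟩, x, rfl, rfl⟩
        exact ⟨a :: x, rfl, rfl⟩
      · rintro ⟨_ | ⟨a, x⟩, hx, rfl⟩
        · cases hx
        · obtain ⟨rfl, rfl⟩ := List.cons_eq_cons.mp hx
          exact ⟨_, ⟨a, rfl, rfl⟩, x, rfl, rfl⟩
  refine ⟨Set σ, Fintype.ofFinite _, N.toDFA, ?_⟩
  ext y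
  rw [NFA.toDFA_correct, NFA.mem_accepts]
  show (∃ t ∈ M.accept, t ∈ N.evalFrom {M.start} y) ↔ _
  simp only [hN]
  constructor
  · rintro ⟨_, ht, x, rfl, rfl⟩; exact ⟨x, ht, rfl⟩
  · rintro ⟨x, hx, rfl⟩; exact ⟨_, hx, x, rfl, rfl⟩

theorem IsRegular.rightQuotient {L : Language α} (hL : L.IsRegular) (K : Set (List α)) :
    Language.IsRegular {x | ∃ y ∈ K, x ++ y ∈ L} := by
  obtain ⟨σ, _, M, rfl⟩ := hL
  refine ⟨σ, inferInstance,
    ⟨M.step, M.start, {s | ∃ y ∈ K, M.evalFrom s y ∈ M.accept}⟩, ?_⟩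
  ext x
  exact exists_congr fun y => and_congr_right fun _ =>
    by rw [DFA.mem_accepts, DFA.eval, DFA.evalFrom_of_append]; rfl

theorem isRegular_singleton (w : List α) : ({w} : Language α).IsRegular := by
  classical
  refine IsRegular.of_finite_range_leftQuotient <|
    ((w.tails.toFinset.finite_toSet.image fun s => ({s} : Language α)).insert 0).subset ?_
  rintro _ ⟨x, rfl⟩
  by_cases h : ∃ y, x ++ y = w
  · obtain ⟨y, rfl⟩ := h
    refine Or.inr ⟨y, by simp [List.mem_tails], ?_⟩
    ext z
    exact Iff.of_eq (List.append_cancel_left_eq x z y).symm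
  · left
    ext z
    exact iff_of_false (fun hz => h ⟨z, hz⟩) id

theorem isRegular_setOf_getLast?_mem [Finite α] (X : Set (Option α)) :
    Language.IsRegular {w : List α | w.getLast? ∈ X} := by
  have := Fintype.ofFinite α
  let M : DFA α (Option α) := ⟨fun _ a => some a, none, X⟩
  have hM : ∀ w, M.evalFrom none w = w.getLast? := by
    intro w
    induction w using List.reverseRecOn <;> simp_all [M]
  exact isRegular_iff.mpr
    ⟨Option α, inferInstance, M, Set.ext fun w => Iff.of_eq (congrArg (· ∈ X) (hM w))⟩

theorem isRegular_setOf_head?_mem [Finite α] (X : Set (Option α)) :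
    Language.IsRegular {w : List α | w.head? ∈ X} := by
  have h : ({w | w.head? ∈ X} : Language α) = Language.reverse {w | w.getLast? ∈ X} :=
    Set.ext fun w => Iff.of_eq (congrArg (· ∈ X) List.getLast?_reverse.symm)
  rw [h]
  exact (isRegular_setOf_getLast?_mem X).reverse

theorem isRegular_iUnion {ι : Type*} [Finite ι] {L : ι → Language α}
    (h : ∀ i, (L i).IsRegular) : Language.IsRegular {x | ∃ i, x ∈ L i} := by
  classical
  choose σ _ M hM using h
  have := Fintype.ofFinite ι
  let N : DFA α (∀ i, σ i) :=
    ⟨fun s a i => (M i).step (s i) a, fun i => (M i).start, {s | ∃ i, s i ∈ (M i).accept}⟩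
  have hN : ∀ x s i, N.evalFrom s x i = (M i).evalFrom (s i) x := by
    intro x
    induction x with
    | nil => intro s i; rfl
    | cons a x ih => intro s i; exact ih _ i
  refine isRegular_iff.mpr ⟨∀ i, σ i, inferInstance, N, ?_⟩
  ext x
  exact exists_congr fun i => by rw [hN, ← hM]; rfl

end Language

namespace AutoSg

variable {A : Type*}

@[simp] theorem padMap_nil_nil : padMap ([] : List A) [] = [] := rfl

@[simp] theorem padMap_cons_cons (a b : A) (u v : List A) :
    padMap (a :: u) (b :: v) = (some a, some b) :: padMap u v := by
  simp [padMap]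

@[simp] theorem padMap_cons_nil (a : A) (u : List A) :
    padMap (a :: u) [] = (some a, none) :: padMap u [] := by
  simp [padMap, List.replicate_succ]

@[simp] theorem padMap_nil_cons (b : A) (v : List A) :
    padMap [] (b :: v) = (none, some b) :: padMap [] v := by
  simp [padMap, List.replicate_succ]

theorem getElem_map_some_append_replicate_none (u : List A) (n k : ℕ)
    (h : k < (u.map some ++ List.replicate n none).length) :
    (u.map some ++ List.replicate n none)[k]'h = u[k]? := by
  rw [List.getElem_append]
  split_ifs with hk
  · simp
  · simp at hk; simp [hk]

theorem padMap_eq_map_range (u v : List A) :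
    padMap u v = (List.range (max u.length v.length)).map fun k => (u[k]?, v[k]?) := by
  apply List.ext_getElem
  · simp [padMap]; omega
  · intro k h1 h2
    simp only [padMap, List.getElem_zipWith, List.getElem_map, List.getElem_range,
      getElem_map_some_append_replicate_none]

theorem map_range_getElem?_pair {u v : List A} {m : ℕ} (hm : max u.length v.length ≤ m) :
    (List.range m).map (fun k => (u[k]?, v[k]?)) =
      padMap u v ++ List.replicate (m - max u.length v.length) (none, none) := by
  obtain ⟨d, rfl⟩ := Nat.exists_eq_add_of_le hm
  rw [List.range_add, List.map_append, padMap_eq_map_range, List.map_map, Nat.add_sub_cancel_left]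
  congr 1
  simp only [List.eq_replicate_iff, List.length_map, List.length_range, List.mem_map,
    List.mem_range, true_and]
  rintro _ ⟨k, -, rfl⟩
  simp only [Function.comp_apply, Prod.mk.injEq, List.getElem?_eq_none_iff]
  omega

@[simp] theorem filterMap_fst_padMap (u v : List A) : (padMap u v).filterMap Prod.fst = u := by
  rw [← Function.id_comp Prod.fst, ← List.filterMap_map, padMap, ← List.zip_eq_zipWith,
    List.map_fst_zip (by simp; omega)]
  simp

@[simp] theorem filterMap_snd_padMap (u v : List A) : (padMap u v).filterMap Prod.snd = v := by
  rw [← Function.id_comp Prod.snd, ← List.filterMap_map, padMap, ← List.zip_eq_zipWith,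
    List.map_snd_zip (by simp; omega)]
  simp

theorem padMap_inj {u v u' v' : List A} : padMap u v = padMap u' v' ↔ u = u' ∧ v = v' := by
  refine ⟨fun h => ⟨?_, ?_⟩, fun h => h.1 ▸ h.2 ▸ rfl⟩
  · rw [← filterMap_fst_padMap u v, h, filterMap_fst_padMap]
  · rw [← filterMap_snd_padMap u v, h, filterMap_snd_padMap]

theorem map_swap_padMap (u v : List A) : (padMap u v).map Prod.swap = padMap v u := by
  simp [padMap_eq_map_range, max_comm]

theorem none_none_not_mem_padMap (u v : List A) :
    ((none, none) : Option A × Option A) ∉ padMap u v := by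
  simp [padMap_eq_map_range]
  omega

def padLang (R : List A → List A → Prop) : Language (Option A × Option A) :=
  {p | ∃ u v, R u v ∧ p = padMap u v}

@[simp] theorem padMap_mem_padLang {R : List A → List A → Prop} {u v : List A} :
    padMap u v ∈ padLang R ↔ R u v :=
  ⟨fun ⟨_, _, h, he⟩ => by obtain ⟨rfl, rfl⟩ := padMap_inj.mp he; exact h,
    fun h => ⟨u, v, h, rfl⟩⟩

/-- `some (e₁, e₂)` records which tracks have ended; `none` is the dead state. -/
def padStep : Option (Bool × Bool) → Option A × Option A → Option (Bool × Bool)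
  | some (false, false), (some _, some _) => some (false, false)
  | some (false, _), (some _, none) => some (false, true)
  | some (_, false), (none, some _) => some (true, false)
  | _, _ => none

theorem foldl_padStep_none (q : List (Option A × Option A)) : q.foldl padStep none = none := by
  induction q with
  | nil => rfl
  | cons _ q ih => exact ih

theorem foldl_padStep_padMap (u v : List A) :
    ∀ e₁ e₂ : Bool, (e₁ → u = []) → (e₂ → v = []) →
      (padMap u v).foldl padStep (some (e₁, e₂)) ≠ none := by
  induction u generalizing v with
  | nil =>
    induction v with
    | nil => simp
    | cons b v ih =>
      intro e₁ e₂ _ h₂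
      cases e₂ <;> simp_all [padStep]
  | cons a u ih =>
    intro e₁ e₂ h₁ h₂
    cases e₁ <;> cases v <;> cases e₂ <;> simp_all [padStep]

theorem exists_padMap_of_foldl_padStep (q : List (Option A × Option A)) :
    ∀ e₁ e₂ : Bool, q.foldl padStep (some (e₁, e₂)) ≠ none →
      ∃ u v, q = padMap u v ∧ (e₁ → u = []) ∧ (e₂ → v = []) := by
  induction q with
  | nil => exact fun _ _ _ => ⟨[], [], rfl, fun _ => rfl, fun _ => rfl⟩
  | cons p q ih =>
    rintro e₁ e₂ h
    obtain ⟨_ | a, _ | b⟩ := p <;> cases e₁ <;> cases e₂ <;>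
      simp only [List.foldl_cons, padStep, foldl_padStep_none] at h
    all_goals try exact absurd rfl h
    all_goals
      obtain ⟨u, v, rfl, hu, hv⟩ := ih _ _ h
      first
      | obtain rfl := hu rfl; exact ⟨[], _, (padMap_nil_cons _ _).symm, fun _ => rfl, nofun⟩
      | obtain rfl := hv rfl; exact ⟨_, [], (padMap_cons_nil _ _).symm, nofun, fun _ => rfl⟩
      | exact ⟨_, _, (padMap_cons_cons _ _ _ _).symm, nofun, nofun⟩

theorem isRegular_padLang_true : (padLang fun _ _ : List A => True).IsRegular := by
  refine ⟨Option (Bool × Bool), inferInstance,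
    ⟨padStep, some (false, false), {s | s ≠ none}⟩, ?_⟩
  ext q
  show q.foldl padStep _ ≠ none ↔ _
  constructor
  · intro h
    obtain ⟨u, v, rfl, -⟩ := exists_padMap_of_foldl_padStep q false false h
    exact ⟨u, v, trivial, rfl⟩
  · rintro ⟨u, v, -, rfl⟩
    exact foldl_padStep_padMap u v false false nofun nofun

theorem padLang_congr {R R' : List A → List A → Prop} (h : ∀ u v, R u v ↔ R' u v) :
    padLang R = padLang R' :=
  congrArg padLang (funext₂ fun u v => propext (h u v))

theorem isRegular_padLang_and_mem_left {R : List A → List A → Prop} {K : Language A}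
    (hR : (padLang R).IsRegular) (hK : K.IsRegular) :
    (padLang fun u v => R u v ∧ u ∈ K).IsRegular := by
  convert hR.inf (hK.preimage_filterMap Prod.fst) using 1
  ext q
  constructor
  · rintro ⟨u, v, ⟨h, hu⟩, rfl⟩
    exact ⟨⟨u, v, h, rfl⟩, by simpa using hu⟩
  · rintro ⟨⟨u, v, h, rfl⟩, hu⟩
    exact ⟨u, v, ⟨h, by simpa using hu⟩, rfl⟩

theorem isRegular_padLang_swap {R : List A → List A → Prop} (hR : (padLang R).IsRegular) :
    (padLang fun u v => R v u).IsRegular := by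
  have h : padLang (fun u v => R v u) = {q | q.map Prod.swap ∈ padLang R} := by
    ext q
    constructor
    · rintro ⟨u, v, h, rfl⟩
      exact ⟨v, u, h, map_swap_padMap u v⟩
    · rintro ⟨v, u, h, hq⟩
      refine ⟨u, v, h, ?_⟩
      rw [← map_swap_padMap, ← hq, List.map_map, Prod.swap_swap_eq, List.map_id]
  rw [h]
  exact hR.preimage_map Prod.swap

theorem isRegular_padLang_or {R Q : List A → List A → Prop} (hR : (padLang R).IsRegular)
    (hQ : (padLang Q).IsRegular) : (padLang fun u v => R u v ∨ Q u v).IsRegular := by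
  convert hR.add hQ using 1
  ext q
  constructor
  · rintro ⟨u, v, h | h, rfl⟩
    exacts [Or.inl ⟨u, v, h, rfl⟩, Or.inr ⟨u, v, h, rfl⟩]
  · rintro (⟨u, v, h, rfl⟩ | ⟨u, v, h, rfl⟩)
    exacts [⟨u, v, Or.inl h, rfl⟩, ⟨u, v, Or.inr h, rfl⟩]

theorem isRegular_padLang_exists {ι : Type*} [Finite ι] {R : ι → List A → List A → Prop}
    (hR : ∀ i, (padLang (R i)).IsRegular) : (padLang fun u v => ∃ i, R i u v).IsRegular := by
  have h : padLang (fun u v => ∃ i, R i u v) = {q | ∃ i, q ∈ padLang (R i)} := by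
    ext q
    constructor
    · rintro ⟨u, v, ⟨i, h⟩, rfl⟩
      exact ⟨i, u, v, h, rfl⟩
    · rintro ⟨i, u, v, h, rfl⟩
      exact ⟨u, v, ⟨i, h⟩, rfl⟩
  rw [h]
  exact Language.isRegular_iUnion hR

theorem isRegular_padLang_eq_and_eq (u₀ v₀ : List A) :
    (padLang fun u v => u = u₀ ∧ v = v₀).IsRegular := by
  convert Language.isRegular_singleton (padMap u₀ v₀) using 1
  ext q
  constructor
  · rintro ⟨u, v, ⟨rfl, rfl⟩, rfl⟩
    rfl
  · rintro rfl
    exact ⟨u₀, v₀, ⟨rfl, rfl⟩, rfl⟩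

def dropBlank : Option A × Option A → Option (Option A × Option A)
  | (none, none) => none
  | p => some p

theorem filterMap_dropBlank_padMap_append (u v : List A) (k : ℕ) :
    (padMap u v ++ List.replicate k (none, none)).filterMap dropBlank = padMap u v := by
  rw [List.filterMap_append, List.filterMap_replicate_of_none rfl, List.append_nil]
  conv_rhs => rw [← List.filterMap_some (l := padMap u v)]
  refine List.filterMap_congr fun p hp => ?_
  rcases p with ⟨_ | _, _ | _⟩
  · exact absurd hp (none_none_not_mem_padMap u v)
  all_goals rfl

theorem filterMap_filterMap_dropBlank {B : Type*} (f : Option A × Option A → Option B)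
    (hf : f (none, none) = none) (q : List (Option A × Option A)) :
    (q.filterMap dropBlank).filterMap f = q.filterMap f := by
  rw [List.filterMap_filterMap]
  refine List.filterMap_congr fun p _ => ?_
  rcases p with ⟨_ | _, _ | _⟩
  · exact hf.symm
  all_goals rfl

theorem tracks_eq_of_filterMap_dropBlank_eq_padMap {B : Type*} {t : List B}
    {π : B → Option A × Option A} {u v : List A}
    (h : (t.map π).filterMap dropBlank = padMap u v) :
    u = t.filterMap (fun x => (π x).1) ∧ v = t.filterMap (fun x => (π x).2) := by
  constructor
  · rw [← filterMap_fst_padMap u v, ← h, filterMap_filterMap_dropBlank _ rfl,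
      List.filterMap_map]
    rfl
  · rw [← filterMap_snd_padMap u v, ← h, filterMap_filterMap_dropBlank _ rfl,
      List.filterMap_map]
    rfl

/- The middle word is guessed as a third track: `T` holds the triples whose tracks `(1, 2)` and
`(2, 3)`, with the blank letters `(none, none)` dropped, lie in the two relations. Projecting `T`
to the tracks `(1, 3)` leaves trailing blanks, which a right quotient removes. -/
theorem isRegular_padLang_comp {R Q : List A → List A → Prop} (hR : (padLang R).IsRegular)
    (hQ : (padLang Q).IsRegular) : (padLang fun u v => ∃ w, R u w ∧ Q w v).IsRegular := by
  let π₁₂ : Option A × Option A × Option A → Option A × Option A := fun x => (x.1, x.2.1)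
  let π₁₃ : Option A × Option A × Option A → Option A × Option A := fun x => (x.1, x.2.2)
  let T : Language (Option A × Option A × Option A) :=
    {t | (t.map π₁₂).filterMap dropBlank ∈ padLang R ∧
      (t.map Prod.snd).filterMap dropBlank ∈ padLang Q}
  have hT : T.IsRegular := by
    simp only [T, List.filterMap_map]
    exact (hR.preimage_filterMap _).inf (hQ.preimage_filterMap _)
  suffices h : padLang (fun u v => ∃ w, R u w ∧ Q w v) = padLang (fun _ _ => True) ⊓
      {q | ∃ y ∈ Set.range fun k => List.replicate k (none, none),
        q ++ y ∈ List.map π₁₃ '' T} by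
    rw [h]
    exact isRegular_padLang_true.inf ((hT.image_map π₁₃).rightQuotient _)
  ext q
  constructor
  · rintro ⟨u, v, ⟨w, huw, hwv⟩, rfl⟩
    set m := max u.length (max w.length v.length)
    let t := (List.range m).map fun k => (u[k]?, w[k]?, v[k]?)
    have hπ₁₂ : t.map π₁₂ =
        padMap u w ++ List.replicate (m - max u.length w.length) (none, none) := by
      rw [← map_range_getElem?_pair (by omega), List.map_map]; rfl
    have hπ₂₃ : t.map Prod.snd =
        padMap w v ++ List.replicate (m - max w.length v.length) (none, none) := by
      rw [← map_range_getElem?_pair (by omega), List.map_map]; rfl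
    have hπ₁₃ : t.map π₁₃ =
        padMap u v ++ List.replicate (m - max u.length v.length) (none, none) := by
      rw [← map_range_getElem?_pair (by omega), List.map_map]; rfl
    refine ⟨⟨u, v, trivial, rfl⟩, _, ⟨_, rfl⟩, t, ⟨?_, ?_⟩, hπ₁₃⟩
    · rw [hπ₁₂, filterMap_dropBlank_padMap_append]; exact padMap_mem_padLang.mpr huw
    · rw [hπ₂₃, filterMap_dropBlank_padMap_append]; exact padMap_mem_padLang.mpr hwv
  · rintro ⟨⟨u, v, -, rfl⟩, _, ⟨k, rfl⟩, t, ⟨⟨a, b, hab, h₁₂⟩, ⟨b', c, hbc, h₂₃⟩⟩, h₁₃⟩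
    have h₁₃' : (t.map π₁₃).filterMap dropBlank = padMap u v := by
      rw [h₁₃, filterMap_dropBlank_padMap_append]
    obtain ⟨rfl, rfl⟩ := tracks_eq_of_filterMap_dropBlank_eq_padMap h₁₂
    obtain ⟨hb, rfl⟩ := tracks_eq_of_filterMap_dropBlank_eq_padMap h₂₃
    obtain ⟨hu, hv⟩ := tracks_eq_of_filterMap_dropBlank_eq_padMap h₁₃'
    exact ⟨u, v, ⟨_, hu ▸ hab, hv ▸ hb ▸ hbc⟩, rfl⟩

def annotate (p : Option A) : List A → List (Option A × A)
  | [] => []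
  | a :: w => (p, a) :: annotate (some a) w

@[simp] theorem annotate_nil (p : Option A) : annotate p [] = [] := rfl

@[simp] theorem annotate_cons (p : Option A) (a : A) (w : List A) :
    annotate p (a :: w) = (p, a) :: annotate (some a) w := rfl

@[simp] theorem map_snd_annotate (p : Option A) (w : List A) : (annotate p w).map Prod.snd = w := by
  induction w generalizing p <;> simp [*]

@[simp] theorem annotate_eq_nil_iff {p : Option A} {w : List A} : annotate p w = [] ↔ w = [] := by
  cases w <;> simp

theorem annotate_append_singleton (p : Option A) (w : List A) (a : A) :
    annotate p (w ++ [a]) = annotate p w ++ [(w.getLast?.or p, a)] := by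
  induction w generalizing p with
  | nil => rfl
  | cons b w ih =>
    rw [List.cons_append, annotate_cons, annotate_cons, ih, List.cons_append]
    cases w with
    | nil => rfl
    | cons c w => simp [List.getLast?_eq_some_getLast]

/-- The state is the last letter read, or `none` once an annotation has been wrong. -/
def annotateStep [DecidableEq A] : Option (Option A) → Option A × A → Option (Option A)
  | some p, (p', a) => if p' = p then some (some a) else none
  | none, _ => none

theorem foldl_annotateStep_ne_none_iff [DecidableEq A] (q : List (Option A × A)) (p : Option A) :
    q.foldl annotateStep (some p) ≠ none ↔ q = annotate p (q.map Prod.snd) := by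
  induction q generalizing p with
  | nil => simp
  | cons x q ih =>
    obtain ⟨p', a⟩ := x
    by_cases hp : p' = p
    · simp [annotateStep, hp, ih]
    · have hdead : ∀ q : List (Option A × A), q.foldl annotateStep none = none := by
        intro q; induction q <;> simp_all [annotateStep]
      simp [annotateStep, hp, hdead]

theorem isRegular_image_annotate [Finite A] {L : Language A} (hL : L.IsRegular) :
    Language.IsRegular (annotate none '' (L : Set (List A))) := by
  classical
  have := Fintype.ofFinite A
  have hcheck : Language.IsRegular
      {q : List (Option A × A) | q.foldl annotateStep (some none) ≠ none} :=
    Language.isRegular_iff.mpr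
      ⟨Option (Option A), inferInstance, ⟨annotateStep, some none, {s | s ≠ none}⟩, rfl⟩
  suffices h : (annotate none '' (L : Set (List A)) : Language (Option A × A)) =
      {q | q.map Prod.snd ∈ L} ⊓ {q | q.foldl annotateStep (some none) ≠ none} by
    rw [h]
    exact (hL.preimage_map Prod.snd).inf hcheck
  ext q
  constructor
  · rintro ⟨w, hw, rfl⟩
    refine ⟨?_, by simp [foldl_annotateStep_ne_none_iff]⟩
    show (annotate none w).map Prod.snd ∈ L
    rwa [map_snd_annotate]
  · rintro ⟨hq, hc⟩
    exact ⟨_, hq, ((foldl_annotateStep_ne_none_iff q none).mp hc).symm⟩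

def annotatePair :
    Option (Option A × Option A) × (Option A × Option A) →
      Option (Option A × A) × Option (Option A × A)
  | (p, (x, y)) => (x.map ((p.bind Prod.fst), ·), y.map ((p.bind Prod.snd), ·))

theorem padMap_annotate (u v : List A) (p : Option (Option A × Option A)) :
    padMap (annotate (p.bind Prod.fst) u) (annotate (p.bind Prod.snd) v) =
      (annotate p (padMap u v)).map annotatePair := by
  induction u generalizing v p with
  | nil =>
    induction v generalizing p with
    | nil => rfl
    | cons b v ih => simpa [annotatePair] using ih (some (none, some b))
  | cons a u ih =>
    cases v with
    | nil => simpa [annotatePair] using ih [] (some (some a, none))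
    | cons b v => simpa [annotatePair] using ih v (some (some a, some b))

theorem isRegular_setOf_padMap_image_annotate [Finite A] {K : Language A}
    {Q : List (Option A × A) → List (Option A × A) → Prop}
    (hQ : (padLang fun u v =>
      u ∈ K ∧ v ∈ K ∧ Q (annotate none u) (annotate none v)).IsRegular) :
    Language.IsRegular {p | ∃ u ∈ annotate none '' (K : Set (List A)),
      ∃ v ∈ annotate none '' (K : Set (List A)), p = padMap u v ∧ Q u v} := by
  suffices h : {p | ∃ u ∈ annotate none '' (K : Set (List A)),
      ∃ v ∈ annotate none '' (K : Set (List A)), p = padMap u v ∧ Q u v} =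
      List.map annotatePair '' (annotate none '' (padLang _ : Set _)) by
    rw [h]
    exact (isRegular_image_annotate hQ).image_map _
  ext p
  constructor
  · rintro ⟨_, ⟨u, hu, rfl⟩, _, ⟨v, hv, rfl⟩, rfl, h⟩
    exact ⟨_, ⟨_, ⟨u, v, ⟨hu, hv, h⟩, rfl⟩, rfl⟩, (padMap_annotate u v none).symm⟩
  · rintro ⟨_, ⟨_, ⟨u, v, ⟨hu, hv, h⟩, rfl⟩, rfl⟩, rfl⟩
    exact ⟨_, ⟨u, hu, rfl⟩, _, ⟨v, hv, rfl⟩, (padMap_annotate u v none).symm, h⟩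

section Semigroup

variable {S : Type*} [Semigroup S] (ψ : A → S)

@[simp] theorem evalWord_eq_none_iff {w : List A} : evalWord ψ w = none ↔ w = [] := by
  cases w <;> simp [evalWord]

theorem exists_evalWord_eq_some {w : List A} (hw : w ≠ []) : ∃ s, evalWord ψ w = some s :=
  Option.ne_none_iff_exists'.mp (mt (evalWord_eq_none_iff ψ).mp hw)

theorem evalWord_append {u v : List A} {s t : S} (hu : evalWord ψ u = some s)
    (hv : evalWord ψ v = some t) : evalWord ψ (u ++ v) = some (s * t) := by
  obtain _ | ⟨a, u⟩ := u
  · cases hu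
  obtain _ | ⟨b, v⟩ := v
  · cases hv
  simp only [evalWord, Option.some.injEq] at hu hv
  simp only [List.cons_append, evalWord, List.map_append, List.map_cons, List.foldl_append,
    List.foldl_cons, hu, ← hv, List.foldl_assoc]

theorem evalWord_append_singleton {w : List A} {s : S} (hw : evalWord ψ w = some s) (a : A) :
    evalWord ψ (w ++ [a]) = some (s * ψ a) :=
  evalWord_append ψ hw rfl

theorem evalWord_append_of_evalWord_eq {x y : List A} (h : evalWord ψ x = evalWord ψ y)
    (z : List A) :
    evalWord ψ (x ++ z) = evalWord ψ (y ++ z) := by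
  obtain hx | ⟨s, hx⟩ := Option.eq_none_or_eq_some (evalWord ψ x)
  · rw [hx, eq_comm, evalWord_eq_none_iff] at h
    rw [(evalWord_eq_none_iff ψ).mp hx, h]
  obtain rfl | hz := eq_or_ne z []
  · simpa using h
  obtain ⟨t, ht⟩ := exists_evalWord_eq_some ψ hz
  rw [evalWord_append ψ hx ht, evalWord_append ψ (h ▸ hx) ht]

end Semigroup

def mulRel {S : Type*} [Semigroup S] (ψ : A → S) (L : Language A) (w u v : List A) : Prop :=
  u ∈ L ∧ v ∈ L ∧ evalWord ψ (u ++ w) = evalWord ψ v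

theorem padLang_mulRel {S : Type*} [Semigroup S] (ψ : A → S) (L : Language A) (w : List A) :
    padLang (mulRel ψ L w) =
      {p | ∃ u ∈ L, ∃ v ∈ L, p = padMap u v ∧ evalWord ψ (u ++ w) = evalWord ψ v} := by
  ext p
  constructor
  · rintro ⟨u, v, ⟨hu, hv, h⟩, rfl⟩
    exact ⟨u, hu, v, hv, rfl, h⟩
  · rintro ⟨u, hu, v, hv, rfl, h⟩
    exact ⟨u, v, ⟨hu, hv, h⟩, rfl⟩

namespace IsAutomaticStructure

variable {S : Type*} [Semigroup S] [Finite A] {ψ : A → S} {L : Language A}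

theorem isRegular_padLang_mulRel (H : IsAutomaticStructure S ψ L) (w : List A) :
    (padLang (mulRel ψ L w)).IsRegular := by
  induction w using List.reverseRecOn with
  | nil => simpa [padLang_mulRel] using H.eq_regular
  | append_singleton w a ih =>
    suffices h : ∀ u v,
        mulRel ψ L (w ++ [a]) u v ↔ ∃ z, mulRel ψ L w u z ∧ mulRel ψ L [a] z v by
      rw [padLang_congr h]
      exact isRegular_padLang_comp ih (by simpa [padLang_mulRel] using H.mul_regular a)
    intro u v
    rw [mulRel, ← List.append_assoc]
    constructor
    · rintro ⟨hu, hv, h⟩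
      obtain ⟨s, hs⟩ := exists_evalWord_eq_some ψ
        (List.append_ne_nil_of_left_ne_nil (H.nonempty_words u hu) w)
      obtain ⟨z, hz, hzs⟩ := H.onto s
      refine ⟨z, ⟨hu, hz, hs.trans hzs.symm⟩, hz, hv, ?_⟩
      rw [← h, evalWord_append_of_evalWord_eq ψ (hs.trans hzs.symm)]
    · rintro ⟨z, ⟨hu, -, h₁⟩, -, hv, h₂⟩
      exact ⟨hu, hv, (evalWord_append_of_evalWord_eq ψ h₁ [a]).trans h₂⟩

end IsAutomaticStructure

section ReesMatrix

variable {U I J : Type*} {P : J → I → U}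

theorem ReesMatrix.ext_iff {x y : ReesMatrix U I J P} :
    x = y ↔ x.1 = y.1 ∧ x.2.1 = y.2.1 ∧ x.2.2 = y.2.2 :=
  Prod.ext_iff.trans (and_congr_right' Prod.ext_iff)

variable [Semigroup U]

@[simp] theorem ReesMatrix.fst_mul (x y : ReesMatrix U I J P) : (x * y).1 = x.1 := rfl

@[simp] theorem ReesMatrix.snd_fst_mul (x y : ReesMatrix U I J P) :
    (x * y).2.1 = x.2.1 * P x.2.2 y.1 * y.2.1 := rfl

@[simp] theorem ReesMatrix.snd_snd_mul (x y : ReesMatrix U I J P) : (x * y).2.2 = y.2.2 := rfl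

theorem ReesMatrix.mul_eq_of_mul_eq {s y t : ReesMatrix U I J P} {x : U} {l : I} {m : U}
    {r r' : J} (ht : t = (y.1, y.2.1 * x, r)) (h : s * y = (l, m, r')) :
    s * t = (l, m * x, r) := by
  subst ht
  obtain ⟨h₁, h₂, -⟩ := ReesMatrix.ext_iff.mp h
  have h₂ : (s * y).2.1 = m := h₂
  exact ReesMatrix.ext_iff.mpr
    ⟨h₁, (mul_assoc _ _ _).symm.trans (congrArg (· * x) h₂), rfl⟩

end ReesMatrix

section Rees

variable {U I J : Type*} [Semigroup U] {P : J → I → U} (ψ : A → ReesMatrix U I J P)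

/-- The letter `(b, a)` stands for the factor `p_{r_b l_a} u_a` that `a` contributes, after `b`,
to the middle coordinate of a product in `M[U; I, J; P]`. -/
def reesMid : Option A × A → U
  | (none, a) => (ψ a).2.1
  | (some b, a) => P (ψ b).2.2 (ψ a).1 * (ψ a).2.1

theorem map_fst_evalWord_rees (w : List A) :
    (evalWord ψ w).map (·.1) = w.head?.map fun a => (ψ a).1 := by
  induction w using List.reverseRecOn with
  | nil => rfl
  | append_singleton w a ih =>
    obtain rfl | hw := eq_or_ne w []
    · rfl
    obtain ⟨x, hx⟩ := exists_evalWord_eq_some ψ hw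
    rw [hx] at ih
    simpa [evalWord_append_singleton ψ hx, List.head?_append_of_ne_nil _ hw] using ih

theorem map_snd_snd_evalWord_rees (w : List A) :
    (evalWord ψ w).map (·.2.2) = w.getLast?.map fun a => (ψ a).2.2 := by
  cases w using List.reverseRecOn with
  | nil => rfl
  | append_singleton w a =>
    obtain rfl | hw := eq_or_ne w []
    · rfl
    obtain ⟨x, hx⟩ := exists_evalWord_eq_some ψ hw
    simp [evalWord_append_singleton ψ hx]

theorem map_snd_fst_evalWord_rees (w : List A) :
    (evalWord ψ w).map (·.2.1) = evalWord (reesMid ψ) (annotate none w) := by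
  induction w using List.reverseRecOn with
  | nil => rfl
  | append_singleton w a ih =>
    obtain rfl | hw := eq_or_ne w []
    · rfl
    obtain ⟨x, hx⟩ := exists_evalWord_eq_some ψ hw
    obtain ⟨b, hb, hbx⟩ := Option.map_eq_some_iff.mp
      ((map_snd_snd_evalWord_rees ψ w).symm.trans (by rw [hx]; rfl))
    rw [hx] at ih
    rw [evalWord_append_singleton ψ hx, annotate_append_singleton, Option.or_none, hb,
      evalWord_append_singleton _ ih.symm]
    simp [reesMid, hbx, mul_assoc]

theorem evalWord_reesMid_annotate {w : List A} {l : I} {m : U} {r : J}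
    (h : evalWord ψ w = some (l, m, r)) : evalWord (reesMid ψ) (annotate none w) = some m := by
  rw [← map_snd_fst_evalWord_rees, h]
  rfl

variable (L : Language A) (i : I) (j : J)

def sliceLang : Language A := {w | w ∈ L ∧ ∃ m, evalWord ψ w = some (i, m, j)}

theorem isRegular_sliceLang [Finite A] (hL : L.IsRegular) : (sliceLang ψ L i j).IsRegular := by
  have h : sliceLang ψ L i j =
      L ⊓ {w | w.head? ∈ {o | o.map (fun a => (ψ a).1) = some i}} ⊓
        {w | w.getLast? ∈ {o | o.map (fun a => (ψ a).2.2) = some j}} := by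
    ext w
    have h₁ := map_fst_evalWord_rees ψ w
    have h₃ := map_snd_snd_evalWord_rees ψ w
    constructor
    · rintro ⟨hw, m, hm⟩
      rw [hm] at h₁ h₃
      exact ⟨⟨hw, h₁.symm⟩, h₃.symm⟩
    · rintro ⟨⟨hw, hi⟩, hj⟩
      obtain ⟨x, hx⟩ := exists_evalWord_eq_some ψ (w := w) (by rintro rfl; cases hi)
      rw [hx] at h₁ h₃
      refine ⟨hw, x.2.1, hx.trans (congrArg some (ReesMatrix.ext_iff.mpr ⟨?_, rfl, ?_⟩))⟩
      · exact Option.some_inj.mp (h₁.trans hi)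
      · exact Option.some_inj.mp (h₃.trans hj)
  rw [h]
  exact (hL.inf (Language.isRegular_setOf_head?_mem _)).inf
    (Language.isRegular_setOf_getLast?_mem _)

end Rees

namespace IsAutomaticStructure

variable {U I J : Type*} [Semigroup U] {P : J → I → U} [Finite A] {ψ : A → ReesMatrix U I J P}
  {L : Language A}

/-- Splitting off the last letter `a` of `u`, the product `u x` is `z · wt a` for a
representative `z ∈ L` of the rest of `u`, unless `u` is a single letter. -/
theorem evalWord_eq_mul_iff (H : IsAutomaticStructure (ReesMatrix U I J P) ψ L) {i : I} {j : J}
    {x : U} {wt : A → List A} (hwtL : ∀ a, wt a ∈ L)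
    (hwt : ∀ a, evalWord ψ (wt a) = some ((ψ a).1, (ψ a).2.1 * x, j))
    {u v : List A} {m : U} (hu : u ∈ L) (hm : evalWord ψ u = some (i, m, j)) :
    (v ∈ L ∧ evalWord ψ v = some (i, m * x, j)) ↔
      (∃ a z, mulRel ψ L [a] z u ∧ mulRel ψ L (wt a) z v) ∨
        (∃ a z, (u = [a] ∧ z = wt a) ∧ mulRel ψ L [] z v) := by
  have single : ∀ a, ψ a = (i, m, j) → evalWord ψ (wt a) = some (i, m * x, j) := by
    intro a ha
    obtain ⟨h₁, h₂, -⟩ := ReesMatrix.ext_iff.mp ha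
    rw [hwt, show (ψ a).1 = i from h₁, show (ψ a).2.1 = m from h₂]
  have split : ∀ {z : List A} {s : ReesMatrix U I J P} {a : A}, evalWord ψ z = some s →
      s * ψ a = (i, m, j) → evalWord ψ (z ++ wt a) = some (i, m * x, j) := fun hs h => by
    rw [evalWord_append ψ hs (hwt _)]
    exact congrArg some (ReesMatrix.mul_eq_of_mul_eq rfl h)
  constructor
  · rintro ⟨hv, hev⟩
    have hne := H.nonempty_words u hu
    obtain ⟨u₀, a, rfl⟩ : ∃ u₀ a, u = u₀ ++ [a] :=
      ⟨u.dropLast, u.getLast hne, (List.dropLast_append_getLast hne).symm⟩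
    obtain rfl | hu₀ := eq_or_ne u₀ []
    · refine Or.inr ⟨a, wt a, ⟨rfl, rfl⟩, hwtL a, hv, ?_⟩
      rw [List.append_nil, hev, single a (Option.some_inj.mp hm)]
    obtain ⟨s, hs⟩ := exists_evalWord_eq_some ψ hu₀
    obtain ⟨z, hz, hzs⟩ := H.onto s
    refine Or.inl ⟨a, z, ⟨hz, hu, evalWord_append_of_evalWord_eq ψ (hzs.trans hs.symm) [a]⟩,
      hz, hv, ?_⟩
    rw [hev, split hzs (Option.some_inj.mp ((evalWord_append_singleton ψ hs a).symm.trans hm))]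
  · rintro (⟨a, z, ⟨hz, -, h₁⟩, -, hv, h₂⟩ | ⟨a, z, ⟨rfl, rfl⟩, -, hv, h⟩)
    · obtain ⟨s, hs⟩ := exists_evalWord_eq_some ψ (H.nonempty_words z hz)
      exact ⟨hv, h₂.symm.trans (split hs (Option.some_inj.mp
        ((evalWord_append_singleton ψ hs a).symm.trans (h₁.trans hm))))⟩
    · rw [List.append_nil] at h
      exact ⟨hv, h.symm.trans (single a (Option.some_inj.mp hm))⟩

theorem isRegular_padLang_sliceLang_eq (H : IsAutomaticStructure (ReesMatrix U I J P) ψ L)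
    (i : I) (j : J) :
    (padLang fun u v => u ∈ sliceLang ψ L i j ∧ v ∈ sliceLang ψ L i j ∧
      evalWord (reesMid ψ) (annotate none u) =
        evalWord (reesMid ψ) (annotate none v)).IsRegular := by
  suffices h : ∀ u v, (u ∈ sliceLang ψ L i j ∧ v ∈ sliceLang ψ L i j ∧
      evalWord (reesMid ψ) (annotate none u) = evalWord (reesMid ψ) (annotate none v)) ↔
      mulRel ψ L [] u v ∧ u ∈ sliceLang ψ L i j by
    rw [padLang_congr h]
    exact isRegular_padLang_and_mem_left (H.isRegular_padLang_mulRel [])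
      (isRegular_sliceLang ψ L i j H.regular)
  intro u v
  constructor
  · rintro ⟨⟨hu, m, hm⟩, ⟨hv, m', hm'⟩, h⟩
    rw [evalWord_reesMid_annotate ψ hm, evalWord_reesMid_annotate ψ hm'] at h
    obtain rfl := Option.some_inj.mp h
    exact ⟨⟨hu, hv, by rw [List.append_nil, hm, hm']⟩, hu, m, hm⟩
  · rintro ⟨⟨hu, hv, h⟩, -, m, hm⟩
    rw [List.append_nil, hm] at h
    exact ⟨⟨hu, m, hm⟩, ⟨hv, m, h.symm⟩,
      by rw [evalWord_reesMid_annotate ψ hm, evalWord_reesMid_annotate ψ h.symm]⟩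

theorem isRegular_padLang_sliceLang_mul (H : IsAutomaticStructure (ReesMatrix U I J P) ψ L)
    (i : I) (j : J) (c : Option A × A) :
    (padLang fun u v => u ∈ sliceLang ψ L i j ∧ v ∈ sliceLang ψ L i j ∧
      evalWord (reesMid ψ) (annotate none u ++ [c]) =
        evalWord (reesMid ψ) (annotate none v)).IsRegular := by
  choose wt hwtL hwt using fun a => H.onto ((ψ a).1, (ψ a).2.1 * reesMid ψ c, j)
  suffices h : ∀ u v, (u ∈ sliceLang ψ L i j ∧ v ∈ sliceLang ψ L i j ∧
      evalWord (reesMid ψ) (annotate none u ++ [c]) = evalWord (reesMid ψ) (annotate none v)) ↔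
      ((∃ a z, mulRel ψ L [a] z u ∧ mulRel ψ L (wt a) z v) ∨
        (∃ a z, (u = [a] ∧ z = wt a) ∧ mulRel ψ L [] z v)) ∧ u ∈ sliceLang ψ L i j by
    rw [padLang_congr h]
    refine isRegular_padLang_and_mem_left (isRegular_padLang_or ?_ ?_)
      (isRegular_sliceLang ψ L i j H.regular)
    · exact isRegular_padLang_exists fun a => isRegular_padLang_comp
        (isRegular_padLang_swap (H.isRegular_padLang_mulRel [a])) (H.isRegular_padLang_mulRel _)
    · exact isRegular_padLang_exists fun a => isRegular_padLang_comp
        (isRegular_padLang_eq_and_eq [a] (wt a)) (H.isRegular_padLang_mulRel [])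
  intro u v
  constructor
  · rintro ⟨⟨hu, m, hm⟩, ⟨hv, m', hm'⟩, h⟩
    rw [evalWord_append_singleton _ (evalWord_reesMid_annotate ψ hm),
      evalWord_reesMid_annotate ψ hm'] at h
    obtain rfl := Option.some_inj.mp h
    exact ⟨(H.evalWord_eq_mul_iff hwtL hwt hu hm).mp ⟨hv, hm'⟩, hu, m, hm⟩
  · rintro ⟨hrel, hu, m, hm⟩
    obtain ⟨hv, hv'⟩ := (H.evalWord_eq_mul_iff hwtL hwt hu hm).mpr hrel
    exact ⟨⟨hu, m, hm⟩, ⟨hv, _, hv'⟩, by rw [evalWord_append_singleton _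
      (evalWord_reesMid_annotate ψ hm), evalWord_reesMid_annotate ψ hv']⟩

theorem reesMatrix_base (H : IsAutomaticStructure (ReesMatrix U I J P) ψ L) (i : I) (j : J) :
    IsAutomaticStructure U (reesMid ψ) (annotate none '' (sliceLang ψ L i j : Set (List A))) where
  nonempty_words := by
    rintro _ ⟨w, hw, rfl⟩
    simpa using H.nonempty_words w hw.1
  regular := isRegular_image_annotate (isRegular_sliceLang ψ L i j H.regular)
  onto m := by
    obtain ⟨w, hw, hm⟩ := H.onto (i, m, j)
    exact ⟨_, ⟨w, ⟨hw, m, hm⟩, rfl⟩, evalWord_reesMid_annotate ψ hm⟩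
  eq_regular := isRegular_setOf_padMap_image_annotate (H.isRegular_padLang_sliceLang_eq i j)
  mul_regular c := isRegular_setOf_padMap_image_annotate (H.isRegular_padLang_sliceLang_mul i j c)

end IsAutomaticStructure

end AutoSg

open AutoSg in
/-- If some entry `p` of `P` satisfies `pU¹ = U`, then automaticity of the Rees matrix
semigroup `M[U; I, J; P]` implies automaticity of the base semigroup `U`. -/
theorem reesMatrix_base_automatic (U I J : Type*) [Semigroup U] (P : J → I → U)
    (hp : ∃ j i, ∀ u : U, u = P j i ∨ ∃ v : U, u = P j i * v)
    (hS : IsAutomaticSemigroup (ReesMatrix U I J P)) :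
    IsAutomaticSemigroup U := by
  obtain ⟨j, i, -⟩ := hp
  obtain ⟨A, _, ψ, L, H⟩ := hS
  exact ⟨Option A × A, inferInstance, reesMid ψ, _, H.reesMatrix_base i j⟩
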